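/- Let M be a loopless matroid of rank n on {0,...,N}, with V = ℤ^{N+1} and W = (ℤ^{N+1})^* dual groups with dual bases {e_i} and {f_i}. Then for every k, the annihilator of F_k(Σ(M)) ⊆ ⋀^k V under the pairing with ⋀^k W equals the degree-k part OS^k of the Orlik–Solomon ideal: F_k(Σ(M))^⊥ = OS^k. -/

import Mathlib

/- Shared definitions: exterior algebra pairing, basis vectors, boundary operator,
   and elementary matroid notions (rank, looplessness) not present in this Mathlib. -/

open ExteriorAlgebra

set_option maxHeartbeats 1000000
set_option synthInstance.maxHeartbeats 400000

open Classical in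
/-- `e_S`: sum of the standard basis vectors of `ℤ^n` indexed by `S`. -/
noncomputable def eS {n : ℕ} (S : Set (Fin n)) : Fin n → ℤ := fun j => if j ∈ S then 1 else 0

/-- the `i`-th standard basis vector of `ℤ^n`. -/
noncomputable def fb {n : ℕ} (i : Fin n) : Fin n → ℤ := Pi.single i 1

/-- The pairing of a pure `k`-fold wedge `v₁ ∧ ... ∧ v_k` of vectors of `V` with the
exterior algebra of the dual module, determined by
`⟨w₁ ∧ ... ∧ w_k, v₁ ∧ ... ∧ v_k⟩ = det (wᵢ (vⱼ))` on the degree-`k` part and `0` on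
other degrees. -/
noncomputable def pairPure {V : Type*} [AddCommGroup V] [Module ℤ V] (k : ℕ)
    (v : Fin k → V) : ExteriorAlgebra ℤ (Module.Dual ℤ V) →ₗ[ℤ] ℤ :=
  ExteriorAlgebra.liftAlternating fun m =>
    if h : m = k then
      h ▸ (Matrix.detRowAlternating.compLinearMap
        (LinearMap.pi fun j : Fin k => LinearMap.applyₗ (v j)))
    else 0

/-- A matroid is loopless if every singleton of the ground set is independent. -/
def Matroid.Loopless' {α : Type*} (M : Matroid α) : Prop := ∀ x ∈ M.E, M.Indep {x}

/-- The rank of a set in a matroid: the largest cardinality of an independent subset. -/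
noncomputable def Matroid.rk' {α : Type*} (M : Matroid α) (X : Set α) : ℕ :=
  sSup {m : ℕ | ∃ I, I ⊆ X ∧ M.Indep I ∧ I.ncard = m}

/-- The dual basis vector `f_i ∈ W = (ℤ^n)^*`: the `i`-th coordinate functional. -/
noncomputable def fd {n : ℕ} (i : Fin n) : Module.Dual ℤ (Fin n → ℤ) :=
  LinearMap.proj i

/-- `F_I = f_{i₀} ∧ ... ∧ f_{i_k}` in `⋀^• W`, `W = (ℤ^n)^*`, in increasing order. -/
noncomputable def FId {n : ℕ} (I : Finset (Fin n)) :
    ExteriorAlgebra ℤ (Module.Dual ℤ (Fin n → ℤ)) :=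
  ExteriorAlgebra.ιMulti ℤ I.card fun j => fd ((I.orderIsoOfFin rfl j : I) : Fin n)

/-- The boundary operator `∂` on `⋀^• W` for `W = (ℤ^n)^*`: interior multiplication by
`e_M = e_0 + ... + e_{n-1}`; it satisfies `∂ f_i = f_i(e_M) = 1`. -/
noncomputable def bndD (n : ℕ) :
    ExteriorAlgebra ℤ (Module.Dual ℤ (Fin n → ℤ)) →ₗ[ℤ]
      ExteriorAlgebra ℤ (Module.Dual ℤ (Fin n → ℤ)) :=
  CliffordAlgebra.contractLeft (Module.Dual.eval ℤ (Fin n → ℤ) (eS Set.univ))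

/-- The Orlik-Solomon ideal in `⋀^• W`, `W = (ℤ^n)^*`: the two-sided ideal generated by
the `∂F_I` over dependent sets `I` of `M`. -/
noncomputable def OSidealD {n : ℕ} (M : Matroid (Fin n)) :
    Submodule ℤ (ExteriorAlgebra ℤ (Module.Dual ℤ (Fin n → ℤ))) :=
  Submodule.span ℤ {z | ∃ x, ∃ y, ∃ I : Finset (Fin n),
    M.Dep (I : Set (Fin n)) ∧ z = x * bndD n (FId I) * y}

/-!
Pairing with `e_{J₁} ∧ ⋯ ∧ e_{J_k}` factors through the algebra map `⋀W → ⋀ℤ^k` induced by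
`f ↦ (f(e_{J_b}))_b`. Two elements of a circuit lie in exactly the same flats of a chain, so
for dependent `I` this map kills `∂F_I`, and OS annihilates the flag polyvectors.

Conversely, `F_S = f_s ∧ ∂F_S` lies in OS for dependent `S`, and straightening broken circuits
with the relations `∂F_{S ∪ e}` writes every `F_S` of degree `k` modulo OS as a combination of
`F_T` with `T` NBC. For NBC `S = {s_0 < ⋯ < s_{k-1}}` the flag of closures of the top segments
`{s_{k-1-b}, …, s_{k-1}}` pairs to `±1` with `F_S` and to `0` with `F_T` for every other NBC
set `T`, so an annihilating element of that span vanishes.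
-/

namespace ExteriorAlgebra

variable {R M : Type*} [CommRing R] [AddCommGroup M] [Module R M]

theorem ι_mul_ιMulti {m : ℕ} (x : M) (w : Fin m → M) :
    ι R x * ιMulti R m w = ιMulti R (m + 1) (Fin.cons x w) := by
  rw [ιMulti_succ_apply (v := Fin.cons x w)]
  rfl

theorem contractLeft_ιMulti {m : ℕ} (d : Module.Dual R M) (v : Fin (m + 1) → M) :
    CliffordAlgebra.contractLeft (Q := 0) d (ιMulti R (m + 1) v) =
      ∑ j : Fin (m + 1), ((-1 : R) ^ (j : ℕ) * d (v j)) • ιMulti R m (v ∘ j.succAbove) := by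
  induction m with
  | zero =>
    rw [ιMulti_succ_apply, ιMulti_zero_apply, mul_one]
    simp [ι, Algebra.algebraMap_eq_smul_one]
  | succ m ih =>
    rw [ιMulti_succ_apply, ι, CliffordAlgebra.contractLeft_ι_mul, ih,
      Fin.sum_univ_succ (n := m + 1), Finset.mul_sum, sub_eq_add_neg, ← Finset.sum_neg_distrib]
    congr 1
    · simp [Matrix.vecTail, Function.comp_def, Fin.succAbove_zero]
    · refine Finset.sum_congr rfl fun j _ => ?_
      have hv : v ∘ j.succ.succAbove = Fin.cons (v 0) (Matrix.vecTail v ∘ j.succAbove) := by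
        ext i
        refine Fin.cases ?_ (fun i => ?_) i
        · simp
        · simp [Fin.succ_succAbove_succ, Matrix.vecTail]
      rw [hv, mul_smul_comm, ← ι, ι_mul_ιMulti, ← neg_smul, Fin.val_succ]
      simp only [Matrix.vecTail, Function.comp_apply]
      ring_nf

/-- Contract the vanishing wedge of the vectors `(v j, 1) ∈ M × R` by the `R`-coordinate. -/
theorem sum_neg_one_pow_smul_ιMulti_succAbove_eq_zero {m : ℕ} (v : Fin (m + 1) → M)
    {a b : Fin (m + 1)} (hab : a ≠ b) (hv : v a = v b) :
    ∑ j : Fin (m + 1), (-1 : R) ^ (j : ℕ) • ιMulti R m (v ∘ j.succAbove) = 0 := by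
  let w : Fin (m + 1) → M × R := fun j => (v j, 1)
  have hw : ιMulti R (m + 1) w = 0 :=
    AlternatingMap.map_eq_zero_of_eq _ w (by simp [w, hv]) hab
  have h := congrArg (ExteriorAlgebra.map (LinearMap.fst R M R))
    (contractLeft_ιMulti (R := R) (LinearMap.snd R M R) w)
  rw [hw, map_zero, map_zero, map_sum] at h
  rw [h]
  refine Finset.sum_congr rfl fun j _ => ?_
  simp [w, map_apply_ιMulti, Function.comp_def]

/-- By the Leibniz rule `d⌋(x ∧ a) = d x • a - x ∧ d⌋a`. -/
theorem ι_mul_contractLeft_of_ι_mul_eq_zero {d : Module.Dual R M} {x : M} (hx : d x = 1)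
    {a : ExteriorAlgebra R M} (ha : ι R x * a = 0) :
    ι R x * CliffordAlgebra.contractLeft (Q := 0) d a = a := by
  have h := CliffordAlgebra.contractLeft_ι_mul (Q := 0) d x a
  rw [← ι, ha, map_zero, hx, one_smul, eq_comm, sub_eq_zero] at h
  exact h.symm

end ExteriorAlgebra

theorem Finset.sum_insert_erase_lt_sum {α : Type*} [DecidableEq α] {S : Finset α} {e y : α}
    (f : α → ℕ) (he : e ∉ S) (hy : y ∈ S) (hlt : f e < f y) :
    ∑ i ∈ insert e (S.erase y), f i < ∑ i ∈ S, f i := by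
  rw [Finset.sum_insert fun h => he (Finset.mem_of_mem_erase h), ← Finset.add_sum_erase S f hy]
  omega

theorem eq_zero_of_mem_span_image_of_dual {R V ι : Type*} [CommRing R] [NoZeroDivisors R]
    [AddCommGroup V] [Module R V] {v : ι → V} {φ : ι → Module.Dual R V} {s : Set ι}
    (hoff : ∀ i ∈ s, ∀ j ∈ s, j ≠ i → φ i (v j) = 0) (hdiag : ∀ i ∈ s, φ i (v i) ≠ 0)
    {x : V} (hx : x ∈ Submodule.span R (v '' s)) (hφ : ∀ i ∈ s, φ i x = 0) : x = 0 := by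
  classical
  obtain ⟨t, hts, a, rfl⟩ := (Submodule.mem_span_image_iff_exists_fun R).1 hx
  have ha : ∀ i, a i = 0 := by
    intro i
    have h := hφ i (hts i.2)
    rw [map_sum, Finset.sum_eq_single i (fun j _ hji => by
      rw [map_smul, hoff i (hts i.2) j (hts j.2) (fun h => hji (Subtype.ext h)), smul_zero])
      (by simp), map_smul, smul_eq_mul] at h
    exact (mul_eq_zero.1 h).resolve_right (hdiag i (hts i.2))
  simp [ha]

section Pairing

variable {V : Type*} [AddCommGroup V] [Module ℤ V]

noncomputable def detForm (k : ℕ) : ExteriorAlgebra ℤ (Fin k → ℤ) →ₗ[ℤ] ℤ :=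
  liftAlternating fun m => if h : m = k then h ▸ Matrix.detRowAlternating else 0

noncomputable def evalAt {k : ℕ} (v : Fin k → V) : Module.Dual ℤ V →ₗ[ℤ] Fin k → ℤ :=
  LinearMap.pi fun j => LinearMap.applyₗ (v j)

theorem pairPure_ιMulti {k : ℕ} (v : Fin k → V) (w : Fin k → Module.Dual ℤ V) :
    pairPure k v (ιMulti ℤ k w) = (Matrix.of fun i j => w i (v j)).det := by
  rw [pairPure, liftAlternating_apply_ιMulti, dif_pos rfl]
  rfl

theorem pairPure_eq_detForm_comp_map {k : ℕ} (v : Fin k → V) :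
    pairPure k v = detForm k ∘ₗ (ExteriorAlgebra.map (evalAt v)).toLinearMap := by
  refine lhom_ext fun m => AlternatingMap.ext fun w => ?_
  simp only [LinearMap.compAlternatingMap_apply, LinearMap.comp_apply, AlgHom.toLinearMap_apply,
    map_apply_ιMulti, pairPure, detForm, liftAlternating_apply_ιMulti]
  by_cases h : m = k
  · subst h
    rw [dif_pos rfl, dif_pos rfl]
    rfl
  · simp [h]

theorem pairPure_mul_mul_eq_zero {k : ℕ} (v : Fin k → V) (x y : ExteriorAlgebra ℤ (Module.Dual ℤ V))
    {z : ExteriorAlgebra ℤ (Module.Dual ℤ V)} (hz : ExteriorAlgebra.map (evalAt v) z = 0) :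
    pairPure k v (x * z * y) = 0 := by
  simp [pairPure_eq_detForm_comp_map, hz]

end Pairing

section BoundaryFormulas

variable {n : ℕ}

theorem FId_eq_ιMulti {S : Finset (Fin n)} {m : ℕ} (h : S.card = m) :
    FId S = ιMulti ℤ m fun j => fd (S.orderEmbOfFin h j) := by
  subst h
  rfl

theorem FId_eq_ιMulti_family {k : ℕ} (S : Set.powersetCard (Fin n) k) :
    FId S.val = ExteriorAlgebra.ιMulti_family ℤ k fd S :=
  FId_eq_ιMulti S.prop

theorem card_erase_orderEmbOfFin {S : Finset (Fin n)} {m : ℕ} (h : S.card = m + 1)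
    (j : Fin (m + 1)) : (S.erase (S.orderEmbOfFin h j)).card = m := by
  rw [Finset.card_erase_of_mem (S.orderEmbOfFin_mem h j), h, Nat.add_sub_cancel]

theorem orderEmbOfFin_comp_succAbove {S : Finset (Fin n)} {m : ℕ} (h : S.card = m + 1)
    (j : Fin (m + 1)) :
    (fun i => S.orderEmbOfFin h (j.succAbove i)) =
      (S.erase (S.orderEmbOfFin h j)).orderEmbOfFin (card_erase_orderEmbOfFin h j) := by
  refine Finset.orderEmbOfFin_unique _ (fun i => Finset.mem_erase.2 ⟨?_, S.orderEmbOfFin_mem h _⟩)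
    ((S.orderEmbOfFin h).strictMono.comp (Fin.strictMono_succAbove j))
  exact fun hij => Fin.succAbove_ne j i ((S.orderEmbOfFin h).injective hij)

theorem eval_eS_univ_fd (i : Fin n) : Module.Dual.eval ℤ (Fin n → ℤ) (eS Set.univ) (fd i) = 1 := by
  simp [fd, eS]

theorem bndD_FId {S : Finset (Fin n)} {m : ℕ} (h : S.card = m + 1) :
    bndD n (FId S) =
      ∑ j : Fin (m + 1), (-1 : ℤ) ^ (j : ℕ) • FId (S.erase (S.orderEmbOfFin h j)) := by
  rw [FId_eq_ιMulti h, bndD, contractLeft_ιMulti]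
  refine Finset.sum_congr rfl fun j _ => ?_
  rw [eval_eS_univ_fd, mul_one, FId_eq_ιMulti (card_erase_orderEmbOfFin h j),
    ← orderEmbOfFin_comp_succAbove h j]
  rfl

theorem ι_mul_FId_of_mem {S : Finset (Fin n)} {x : Fin n} (hx : x ∈ S) :
    ι ℤ (fd x) * FId S = 0 := by
  obtain ⟨l, rfl⟩ : x ∈ Set.range (S.orderEmbOfFin rfl) := by
    rwa [Finset.range_orderEmbOfFin]
  rw [FId_eq_ιMulti rfl, ι_mul_ιMulti]
  exact AlternatingMap.map_eq_zero_of_eq _ _ (i := 0) (j := l.succ) (by simp)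
    (Fin.succ_ne_zero l).symm

theorem FId_mem_OSidealD_of_dep {M : Matroid (Fin n)} {S : Finset (Fin n)}
    (hS : M.Dep (S : Set (Fin n))) : FId S ∈ OSidealD M := by
  obtain ⟨x, hx⟩ := Finset.coe_nonempty.1 hS.nonempty
  have h := ι_mul_contractLeft_of_ι_mul_eq_zero (eval_eS_univ_fd x) (ι_mul_FId_of_mem hx)
  rw [← h]
  exact Submodule.subset_span ⟨_, 1, S, hS, by rw [mul_one]; rfl⟩

theorem span_fd : Submodule.span ℤ (Set.range (fd (n := n))) = ⊤ := by
  have : fd = ⇑(Pi.basisFun ℤ (Fin n)).dualBasis := by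
    ext i x
    simp [fd]
  rw [this, Module.Basis.span_eq]

theorem exteriorPower_le_span_FId (k : ℕ) :
    ⋀[ℤ]^k (Module.Dual ℤ (Fin n → ℤ)) ≤
      Submodule.span ℤ (Set.range fun S : Set.powersetCard (Fin n) k => FId S.val) := by
  rw [← exteriorPower.ιMulti_family_span_fixedDegree_of_span ℤ span_fd]
  simp only [FId_eq_ιMulti_family, le_refl]

end BoundaryFormulas

section Chains

variable {α : Type*} {k : ℕ} {c : Fin k → Set α} {x y : α}

open Classical in
noncomputable def firstMem (c : Fin k → Set α) (x : α) : WithTop (Fin k) :=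
  (Finset.univ.filter fun b => x ∈ c b).min

theorem mem_iff_firstMem_le (hc : Monotone c) {b : Fin k} : x ∈ c b ↔ firstMem c x ≤ b := by
  classical
  refine ⟨fun hx => Finset.min_le (by simpa using hx), fun hle => ?_⟩
  obtain ⟨b₀, hb₀⟩ := WithTop.ne_top_iff_exists.1 (ne_top_of_le_ne_top WithTop.coe_ne_top hle)
  have hmem := Finset.mem_of_min hb₀.symm
  rw [← hb₀, WithTop.coe_le_coe] at hle
  exact hc hle (by simpa using hmem)

theorem firstMem_eq_firstMem_iff (hc : Monotone c) :
    firstMem c x = firstMem c y ↔ ∀ b, x ∈ c b ↔ y ∈ c b := by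
  classical
  refine ⟨fun h b => by rw [mem_iff_firstMem_le hc, mem_iff_firstMem_le hc, h], fun h => ?_⟩
  simp only [firstMem, h]

theorem firstMem_ne_top_iff : firstMem c x ≠ ⊤ ↔ ∃ b, x ∈ c b := by
  classical
  simp [firstMem, Finset.min_eq_top, Finset.filter_eq_empty_iff]

end Chains

namespace Matroid

variable {α : Type*} {M : Matroid α}

theorem IsCircuit.nontrivial_of_loopless' (hM : M.Loopless') {C : Set α} (hC : M.IsCircuit C) :
    C.Nontrivial := by
  obtain ⟨x, hx⟩ := hC.nonempty
  by_contra h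
  rw [Set.not_nontrivial_iff] at h
  rw [h.eq_singleton_of_mem hx] at hC
  exact hC.not_indep (hM x (hC.subset_ground rfl))

/-- The flat where the last-but-one element of the circuit enters contains all of the circuit
but its last element, hence also that element. -/
theorem IsCircuit.not_injOn_firstMem [Finite α] {C : Set α} (hC : M.IsCircuit C)
    (hCC : C.Nontrivial) {k : ℕ} {c : Fin k → Set α} (hc : ∀ b, M.IsFlat (c b))
    (hmono : Monotone c) : ¬ Set.InjOn (firstMem c) C := by
  intro hinj
  obtain ⟨x, hxC, hxmax⟩ := Set.exists_max_image C (firstMem c) C.toFinite hC.nonempty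
  obtain ⟨y, hyC, hyx⟩ := hCC.exists_ne x
  obtain ⟨z, hzC, hzmax⟩ :=
    Set.exists_max_image (C \ {x}) (firstMem c) (Set.toFinite _) ⟨y, hyC, hyx⟩
  have hlt : firstMem c z < firstMem c x :=
    (hxmax z hzC.1).lt_of_ne fun h => hzC.2 (hinj hzC.1 hxC h)
  obtain ⟨b, hb⟩ := WithTop.ne_top_iff_exists.1 hlt.ne_top
  have hsub : C \ {x} ⊆ c b := fun w hw => (mem_iff_firstMem_le hmono).2 (hb ▸ hzmax w hw)
  have hx : x ∈ c b := by
    rw [← (hc b).closure]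
    exact M.closure_subset_closure hsub (hC.mem_closure_sdiff_singleton_of_mem hxC)
  exact (mem_iff_firstMem_le hmono).1 hx |>.not_gt (hb ▸ hlt)

theorem Dep.exists_ne_forall_mem_iff [Finite α] (hM : M.Loopless') {I : Set α} (hI : M.Dep I)
    {k : ℕ} {c : Fin k → Set α} (hc : ∀ b, M.IsFlat (c b)) (hmono : Monotone c) :
    ∃ x ∈ I, ∃ y ∈ I, x ≠ y ∧ ∀ b, x ∈ c b ↔ y ∈ c b := by
  obtain ⟨C, hCI, hC⟩ := hI.exists_isCircuit_subset
  have h := hC.not_injOn_firstMem (hC.nontrivial_of_loopless' hM) hc hmono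
  simp only [Set.InjOn, not_forall] at h
  obtain ⟨x, hx, y, hy, hfirst, hxy⟩ := h
  exact ⟨x, hCI hx, y, hCI hy, hxy, (firstMem_eq_firstMem_iff hmono).1 hfirst⟩

theorem Indep.mem_closure_iff_of_subset {I A : Set α} (hI : M.Indep I) (hAI : A ⊆ I) {x : α}
    (hx : x ∈ I) : x ∈ M.closure A ↔ x ∈ A := by
  simpa [hx] using Set.ext_iff.1 (hI.closure_inter_eq_self_of_subset hAI) x

variable [LinearOrder α]

/-- `S` is independent and contains no broken circuit `C \ {min C}`. -/
def IsNBC (M : Matroid α) (S : Finset α) : Prop :=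
  M.Indep S ∧ ∀ C e, M.IsCircuit C → IsLeast C e → ¬ C \ {e} ⊆ S

/-- If `t ≠ s`, the circuit in `insert t {x ∈ S | s ≤ x}` has least element `t` or `s`, and
removing it leaves a broken circuit in `S` or in `T`. -/
theorem IsNBC.eq_of_mem_closure {S T : Finset α} (hS : M.IsNBC S) (hT : M.IsNBC T) {s t : α}
    (ht : t ∈ T) (hST : ∀ x ∈ S, s < x → x ∈ T) (htS : t ∈ S → t ≤ s)
    (hcl : t ∈ M.closure {x | x ∈ S ∧ s ≤ x}) : t = s := by
  set A := {x | x ∈ S ∧ s ≤ x}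
  by_contra hts
  have hA : M.Indep A := hS.1.subset fun x hx => hx.1
  obtain ⟨C, hCA, hC⟩ := (hA.insert_dep_iff.2
    ⟨hcl, fun h => hts (le_antisymm (htS h.1) h.2)⟩).exists_isCircuit_subset
  have hAT : insert t (A \ {s}) ⊆ T := by
    rintro x (rfl | ⟨⟨hxS, hsx⟩, hxs⟩)
    · exact ht
    · exact hST x hxS (lt_of_le_of_ne hsx (Ne.symm hxs))
  have hsC : s ∈ C := by
    by_contra hsC
    refine hC.not_indep (hT.1.subset (subset_trans ?_ hAT))
    rintro x hx
    rcases hCA hx with rfl | hxA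
    · exact Set.mem_insert _ _
    · exact Or.inr ⟨hxA, fun h => hsC (h ▸ hx)⟩
  have htC : t ∈ C := by
    by_contra htC
    exact hC.not_indep (hA.subset fun x hx => (hCA hx).resolve_left fun h => htC (h ▸ hx))
  have hge : ∀ x ∈ C, x ≠ t → s ≤ x := fun x hx hxt => ((hCA hx).resolve_left hxt).2
  rcases lt_or_gt_of_ne hts with hlt | hlt
  · refine hS.2 C t hC ⟨htC, fun x hx => ?_⟩ fun x hx => ?_
    · rcases eq_or_ne x t with rfl | hxt
      · exact le_rfl
      · exact hlt.le.trans (hge x hx hxt)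
    · exact ((hCA hx.1).resolve_left hx.2).1
  · refine hT.2 C s hC ⟨hsC, fun x hx => ?_⟩ fun x hx => hAT ?_
    · rcases eq_or_ne x t with rfl | hxt
      · exact hlt.le
      · exact hge x hx hxt
    · rcases hCA hx.1 with rfl | hxA
      · exact Set.mem_insert _ _
      · exact Or.inr ⟨hxA, hx.2⟩

end Matroid

section FlagPairing

variable {n k : ℕ}

open Classical in
theorem fd_eS (x : Fin n) (S : Set (Fin n)) : fd x (eS S) = if x ∈ S then 1 else 0 := rfl

theorem map_evalAt_bndD_FId_eq_zero {M : Matroid (Fin n)} (hM : M.Loopless')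
    {c : Fin k → Set (Fin n)} (hc : ∀ b, M.IsFlat (c b)) (hmono : Monotone c)
    {I : Finset (Fin n)} (hI : M.Dep (I : Set (Fin n))) :
    ExteriorAlgebra.map (evalAt fun b => eS (c b)) (bndD n (FId I)) = 0 := by
  obtain ⟨m, hm⟩ : ∃ m, I.card = m + 1 :=
    Nat.exists_eq_succ_of_ne_zero (Finset.card_ne_zero.2 (Finset.coe_nonempty.1 hI.nonempty))
  obtain ⟨x, hx, y, hy, hxy, hiff⟩ := hI.exists_ne_forall_mem_iff hM hc hmono
  obtain ⟨a, rfl⟩ : x ∈ Set.range (I.orderEmbOfFin hm) := by rwa [Finset.range_orderEmbOfFin]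
  obtain ⟨a', rfl⟩ : y ∈ Set.range (I.orderEmbOfFin hm) := by rwa [Finset.range_orderEmbOfFin]
  rw [FId_eq_ιMulti hm, bndD, contractLeft_ιMulti, map_sum]
  simp only [map_smul, map_apply_ιMulti, eval_eS_univ_fd, mul_one]
  have hrow : evalAt (fun b => eS (c b)) (fd (I.orderEmbOfFin hm a)) =
      evalAt (fun b => eS (c b)) (fd (I.orderEmbOfFin hm a')) := by
    ext b
    change fd _ (eS (c b)) = fd _ (eS (c b))
    classical
    rw [fd_eS, fd_eS, if_congr (hiff b) rfl rfl]
  exact sum_neg_one_pow_smul_ιMulti_succAbove_eq_zero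
    (evalAt (fun b => eS (c b)) ∘ fun j => fd (I.orderEmbOfFin hm j))
    (fun h => hxy (by rw [h])) hrow

theorem pairPure_flag_eq_zero_of_mem_OSidealD {M : Matroid (Fin n)} (hM : M.Loopless')
    {c : Fin k → Set (Fin n)} (hc : ∀ b, M.IsFlat (c b)) (hmono : Monotone c)
    {f : ExteriorAlgebra ℤ (Module.Dual ℤ (Fin n → ℤ))} (hf : f ∈ OSidealD M) :
    pairPure k (fun b => eS (c b)) f = 0 := by
  induction hf using Submodule.span_induction with
  | mem z hz =>
    obtain ⟨x, y, I, hI, rfl⟩ := hz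
    exact pairPure_mul_mul_eq_zero _ x y (map_evalAt_bndD_FId_eq_zero hM hc hmono hI)
  | zero => exact map_zero _
  | add x y _ _ hx hy => rw [map_add, hx, hy, add_zero]
  | smul a x _ hx => rw [map_smul, hx, smul_zero]

end FlagPairing

section NBCSpan

variable {n : ℕ} {M : Matroid (Fin n)}

noncomputable def nbcSpan (M : Matroid (Fin n)) (k : ℕ) :
    Submodule ℤ (ExteriorAlgebra ℤ (Module.Dual ℤ (Fin n → ℤ))) :=
  Submodule.span ℤ (FId '' {S | S.card = k ∧ M.IsNBC S})

theorem FId_erase_mem_of_bndD_FId_mem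
    {P : Submodule ℤ (ExteriorAlgebra ℤ (Module.Dual ℤ (Fin n → ℤ)))} {T : Finset (Fin n)}
    {x : Fin n} (hx : x ∈ T) (hT : bndD n (FId T) ∈ P)
    (hP : ∀ y ∈ T, y ≠ x → FId (T.erase y) ∈ P) : FId (T.erase x) ∈ P := by
  obtain ⟨m, hm⟩ : ∃ m, T.card = m + 1 :=
    Nat.exists_eq_succ_of_ne_zero (Finset.card_ne_zero.2 ⟨x, hx⟩)
  obtain ⟨j, rfl⟩ : x ∈ Set.range (T.orderEmbOfFin hm) := by rwa [Finset.range_orderEmbOfFin]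
  rw [bndD_FId hm, ← Finset.sum_erase_add _ _ (Finset.mem_univ j)] at hT
  have hrest : ∑ i ∈ Finset.univ.erase j, (-1 : ℤ) ^ (i : ℕ) • FId (T.erase (T.orderEmbOfFin hm i))
      ∈ P := by
    refine P.sum_mem fun i hi => P.smul_mem _ (hP _ (T.orderEmbOfFin_mem hm i) fun h => ?_)
    exact (Finset.mem_erase.1 hi).1 ((T.orderEmbOfFin hm).injective h)
  exact (P.smul_mem_iff_of_isUnit ((isUnit_neg_one).pow _)).1 ((P.add_mem_iff_right hrest).1 hT)

theorem FId_mem_OSidealD_sup_nbcSpan (hE : M.E = Set.univ) {k : ℕ} {S : Finset (Fin n)}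
    (hS : S.card = k) : FId S ∈ OSidealD M ⊔ nbcSpan M k := by
  induction hw : ∑ i ∈ S, (i : ℕ) using Nat.strong_induction_on generalizing S with
  | _ w ih =>
  have hground : ∀ X : Set (Fin n), X ⊆ M.E := fun X => hE ▸ Set.subset_univ X
  by_cases hdep : M.Dep S
  · exact Submodule.mem_sup_left (FId_mem_OSidealD_of_dep hdep)
  have hind : M.Indep S := (Matroid.not_dep_iff (hground _)).1 hdep
  by_cases hnbc : M.IsNBC S
  · exact Submodule.mem_sup_right (Submodule.subset_span ⟨S, ⟨hS, hnbc⟩, rfl⟩)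
  obtain ⟨C, e, hC, he, hCS⟩ : ∃ C e, M.IsCircuit C ∧ IsLeast C e ∧ C \ {e} ⊆ S := by
    simpa [Matroid.IsNBC, hind] using hnbc
  have hCS' : C ⊆ ↑(insert e S) := fun x hx => by
    rcases eq_or_ne x e with rfl | hxe
    · exact Finset.mem_insert_self _ _
    · exact Finset.mem_insert_of_mem (hCS ⟨hx, hxe⟩)
  have heS : e ∉ S := fun h => hdep (hC.dep.superset
    (fun x hx => (Finset.mem_insert.1 (hCS' hx)).elim (fun hxe => hxe ▸ h) id) (hground _))
  rw [← Finset.erase_insert heS]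
  refine FId_erase_mem_of_bndD_FId_mem (Finset.mem_insert_self e S)
    (Submodule.mem_sup_left (Submodule.subset_span ⟨1, 1, _, hC.dep.superset hCS' (hground _),
      by rw [one_mul, mul_one]⟩)) fun y hy hye => ?_
  have hyS : y ∈ S := (Finset.mem_insert.1 hy).resolve_left hye
  by_cases hyC : y ∈ C
  · rw [Finset.erase_insert_of_ne (s := S) (Ne.symm hye)]
    refine ih _ ?_ (by rw [Finset.card_insert_of_notMem (fun h => heS (Finset.mem_of_mem_erase h)),
      Finset.card_erase_add_one hyS, hS]) rfl
    exact hw ▸ Finset.sum_insert_erase_lt_sum _ heS hyS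
      (show e < y from (he.2 hyC).lt_of_ne (Ne.symm hye))
  · refine Submodule.mem_sup_left (FId_mem_OSidealD_of_dep (hC.dep.superset ?_ (hground _)))
    intro x hx
    exact Finset.mem_erase.2 ⟨fun h => hyC (h ▸ hx), hCS' hx⟩

end NBCSpan

namespace Matroid

variable {α : Type*} [LinearOrder α] {M : Matroid α} {S : Finset α} {k : ℕ}

/-- The flag `cl {s_{k-1}} ⊆ cl {s_{k-2}, s_{k-1}} ⊆ ⋯ ⊆ cl S` of closures of the top segments
of `S = {s_0 < ⋯ < s_{k-1}}`. -/
def topFlag (M : Matroid α) (S : Finset α) (hk : S.card = k) (b : Fin k) : Set α :=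
  M.closure {x | x ∈ S ∧ S.orderEmbOfFin hk b.rev ≤ x}

theorem Indep.orderEmbOfFin_mem_topFlag_iff (hS : M.Indep S) (hk : S.card = k) (a b : Fin k) :
    S.orderEmbOfFin hk a ∈ M.topFlag S hk b ↔ a.rev ≤ b := by
  rw [topFlag, hS.mem_closure_iff_of_subset (fun x hx => hx.1) (S.orderEmbOfFin_mem hk a)]
  simp [Fin.rev_le_iff, S.orderEmbOfFin_mem hk a]

theorem Indep.topFlag_strictMono (hS : M.Indep S) (hk : S.card = k) :
    StrictMono (M.topFlag S hk) := by
  intro b b' hbb'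
  refine ⟨M.closure_subset_closure fun x hx => ⟨hx.1, le_trans ?_ hx.2⟩, fun h => ?_⟩
  · exact (S.orderEmbOfFin hk).monotone (Fin.rev_le_rev.2 hbb'.le)
  · have hmem := (hS.orderEmbOfFin_mem_topFlag_iff hk b'.rev b').2 (by simp)
    exact ((hS.orderEmbOfFin_mem_topFlag_iff hk b'.rev b).1 (h hmem)).not_gt (by simpa using hbb')

/-- By induction on `b`, the element of `T` entering the flag at step `b` is `s_{k-1-b}`. -/
theorem IsNBC.eq_of_injective_firstMem_topFlag {T : Finset α} (hS : M.IsNBC S) (hT : M.IsNBC T)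
    (hkS : S.card = k) (hkT : T.card = k)
    (hne : ∀ a, firstMem (M.topFlag S hkS) (T.orderEmbOfFin hkT a) ≠ ⊤)
    (hinj : Function.Injective fun a => firstMem (M.topFlag S hkS) (T.orderEmbOfFin hkT a)) :
    T = S := by
  set c := M.topFlag S hkS
  set u : Fin k → α := fun b => S.orderEmbOfFin hkS b.rev
  have hmono : Monotone c := (hS.1.topFlag_strictMono hkS).monotone
  have hsurj : ∀ b : Fin k, ∃ t ∈ T, firstMem c t = b := by
    have : Function.Surjective fun a => (firstMem c (T.orderEmbOfFin hkT a)).untop (hne a) :=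
      Finite.injective_iff_surjective.1 fun a a' h => hinj (by simpa using congrArg WithTop.some h)
    intro b
    obtain ⟨a, ha⟩ := this b
    exact ⟨_, T.orderEmbOfFin_mem hkT a, by rw [← ha, WithTop.coe_untop]⟩
  have hS_mem : ∀ i, S.orderEmbOfFin hkS i ∈ c i.rev := fun i =>
    (hS.1.orderEmbOfFin_mem_topFlag_iff hkS i i.rev).2 (by simp)
  have hu : ∀ b, u b ∈ T := by
    intro b
    induction b using WellFoundedLT.induction with
    | _ b ih =>
    obtain ⟨t, ht, htb⟩ := hsurj b
    convert ht using 1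
    refine (hS.eq_of_mem_closure hT ht (fun x hx hux => ?_) (fun htS => ?_)
      ((mem_iff_firstMem_le hmono).2 htb.le)).symm
    · obtain ⟨i, rfl⟩ : x ∈ Set.range (S.orderEmbOfFin hkS) := by rwa [Finset.range_orderEmbOfFin]
      have hlt : i.rev < b := Fin.rev_lt_iff.2 ((S.orderEmbOfFin hkS).lt_iff_lt.1 hux)
      simpa [u] using ih i.rev hlt
    · obtain ⟨i, rfl⟩ : t ∈ Set.range (S.orderEmbOfFin hkS) := by rwa [Finset.range_orderEmbOfFin]
      refine (S.orderEmbOfFin hkS).le_iff_le.2 (Fin.le_rev_iff.2 ?_)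
      rw [← WithTop.coe_le_coe, ← htb]
      exact (mem_iff_firstMem_le hmono).1 (hS_mem i)
  refine (Finset.eq_of_subset_of_card_le (fun x hx => ?_) (by rw [hkS, hkT])).symm
  obtain ⟨i, rfl⟩ : x ∈ Set.range (S.orderEmbOfFin hkS) := by rwa [Finset.range_orderEmbOfFin]
  simpa [u] using hu i.rev

end Matroid

section TopFlagPairing

variable {n k : ℕ} {M : Matroid (Fin n)}

open Classical in
theorem pairPure_FId (c : Fin k → Set (Fin n)) {T : Finset (Fin n)} (hT : T.card = k) :
    pairPure k (fun b => eS (c b)) (FId T) =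
      (Matrix.of fun a b => if T.orderEmbOfFin hT a ∈ c b then (1 : ℤ) else 0).det := by
  rw [FId_eq_ιMulti hT, pairPure_ιMulti]
  rfl

/-- A nonzero determinant has no zero row and no two equal rows. -/
theorem firstMem_injective_of_pairPure_FId_ne_zero {c : Fin k → Set (Fin n)} (hc : Monotone c)
    {T : Finset (Fin n)} (hT : T.card = k) (h : pairPure k (fun b => eS (c b)) (FId T) ≠ 0) :
    (∀ a, firstMem c (T.orderEmbOfFin hT a) ≠ ⊤) ∧
      Function.Injective fun a => firstMem c (T.orderEmbOfFin hT a) := by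
  classical
  rw [pairPure_FId c hT] at h
  refine ⟨fun a => firstMem_ne_top_iff.2 ?_, fun a a' haa' => ?_⟩
  · by_contra! hrow
    exact h (Matrix.det_eq_zero_of_row_eq_zero a fun b => if_neg (hrow b))
  · by_contra hne
    refine h (Matrix.det_zero_of_row_eq hne (funext fun b => ?_))
    simp only [Matrix.of_apply, if_congr ((firstMem_eq_firstMem_iff hc).1 haa' b) rfl rfl]

theorem Matroid.Indep.pairPure_topFlag_FId_ne_zero {S : Finset (Fin n)} (hS : M.Indep S)
    (hk : S.card = k) : pairPure k (fun b => eS (M.topFlag S hk b)) (FId S) ≠ 0 := by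
  classical
  have hmat : (Matrix.of fun a b => if S.orderEmbOfFin hk a ∈ M.topFlag S hk b then (1 : ℤ) else 0)
      = (Matrix.of fun a b : Fin k => if a ≤ b then (1 : ℤ) else 0).submatrix Fin.revPerm id := by
    ext a b
    simp [hS.orderEmbOfFin_mem_topFlag_iff]
  have htri : (Matrix.of fun a b : Fin k => if a ≤ b then (1 : ℤ) else 0).det = 1 := by
    rw [Matrix.det_of_isUpperTriangular fun a b hba => by simpa using hba]
    simp
  rw [pairPure_FId _ hk, hmat, Matrix.det_permute, htri, mul_one]
  exact Units.ne_zero _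

theorem Matroid.IsNBC.pairPure_topFlag_FId_eq_zero {S T : Finset (Fin n)} (hS : M.IsNBC S)
    (hT : M.IsNBC T) (hkS : S.card = k) (hkT : T.card = k) (hne : T ≠ S) :
    pairPure k (fun b => eS (M.topFlag S hkS b)) (FId T) = 0 := by
  by_contra h
  obtain ⟨hrow, hinj⟩ := firstMem_injective_of_pairPure_FId_ne_zero
    (hS.1.topFlag_strictMono hkS).monotone hkT h
  exact hne (hS.eq_of_injective_firstMem_topFlag hT hkS hkT hrow hinj)

theorem eq_zero_of_mem_nbcSpan {k : ℕ} {f : ExteriorAlgebra ℤ (Module.Dual ℤ (Fin n → ℤ))}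
    (hf : f ∈ nbcSpan M k)
    (hpair : ∀ c : Fin k → Set (Fin n), (∀ b, M.IsFlat (c b)) → StrictMono c →
      pairPure k (fun b => eS (c b)) f = 0) : f = 0 := by
  refine eq_zero_of_mem_span_image_of_dual (φ := fun S => if hS : S.card = k then
      pairPure k (fun b => eS (M.topFlag S hS b)) else 0) ?_ ?_ hf ?_
  · rintro S ⟨hkS, hS⟩ T ⟨hkT, hT⟩ hne
    simpa [hkS] using hS.pairPure_topFlag_FId_eq_zero hT hkS hkT hne
  · rintro S ⟨hkS, hS⟩
    simpa [hkS] using hS.1.pairPure_topFlag_FId_ne_zero hkS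
  · rintro S ⟨hkS, hS⟩
    simpa [hkS] using
      hpair (M.topFlag S hkS) (fun b => M.isFlat_closure _) (hS.1.topFlag_strictMono hkS)

end TopFlagPairing

theorem stmt_14_general {N : ℕ} (M : Matroid (Fin (N + 1))) (hM : M.Loopless')
    (hE : M.E = Set.univ) (k : ℕ) :
    {f : ExteriorAlgebra ℤ (Module.Dual ℤ (Fin (N + 1) → ℤ)) |
        f ∈ ⋀[ℤ]^k (Module.Dual ℤ (Fin (N + 1) → ℤ)) ∧
        ∀ c : Fin k → Set (Fin (N + 1)), (∀ i, M.IsFlat (c i)) → StrictMono c →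
          pairPure k (fun i => eS (c i)) f = 0} =
      {f | f ∈ OSidealD M ∧ f ∈ ⋀[ℤ]^k (Module.Dual ℤ (Fin (N + 1) → ℤ))} := by
  have hOS : ∀ c : Fin k → Set (Fin (N + 1)), (∀ i, M.IsFlat (c i)) → StrictMono c →
      ∀ f ∈ OSidealD M, pairPure k (fun i => eS (c i)) f = 0 := fun c hc hmono _ hf =>
    pairPure_flag_eq_zero_of_mem_OSidealD hM hc hmono.monotone hf
  ext f
  refine ⟨fun ⟨hfk, hf⟩ => ⟨?_, hfk⟩, fun ⟨hf, hfk⟩ => ⟨hfk, fun c hc hmono => hOS c hc hmono f hf⟩⟩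
  have hsup : f ∈ OSidealD M ⊔ nbcSpan M k := by
    refine Submodule.span_le.2 ?_ (exteriorPower_le_span_FId k hfk)
    rintro _ ⟨S, rfl⟩
    exact FId_mem_OSidealD_sup_nbcSpan hE S.prop
  obtain ⟨g, hg, h, hh, rfl⟩ := Submodule.mem_sup.1 hsup
  have h0 : h = 0 := eq_zero_of_mem_nbcSpan hh fun c hc hmono => by
    simpa [hOS c hc hmono g hg] using hf c hc hmono
  simpa [h0] using hg

/-- For a loopless matroid `M` on `{0, ..., N}`, with `V = ℤ^{N+1}`
and `W = V^*` in dual bases, and every `k`: the annihilator of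
`F_k(Σ(M)) ⊆ ⋀^k V` (spanned by the flag polyvectors `e_{J₁} ∧ ... ∧ e_{J_k}` over
flags of flats) inside `⋀^k W` equals the degree-`k` part `OS^k` of the Orlik-Solomon
ideal. -/
theorem stmt_14 {N n : ℕ} (M : Matroid (Fin (N + 1))) (hM : M.Loopless')
    (hE : M.E = Set.univ) (hn : M.rk' Set.univ = n) (k : ℕ) :
    {f : ExteriorAlgebra ℤ (Module.Dual ℤ (Fin (N + 1) → ℤ)) |
        f ∈ ⋀[ℤ]^k (Module.Dual ℤ (Fin (N + 1) → ℤ)) ∧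
        ∀ c : Fin k → Set (Fin (N + 1)), (∀ i, M.IsFlat (c i)) → StrictMono c →
          pairPure k (fun i => eS (c i)) f = 0} =
      {f | f ∈ OSidealD M ∧ f ∈ ⋀[ℤ]^k (Module.Dual ℤ (Fin (N + 1) → ℤ))} :=
  stmt_14_general M hM hE k
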